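/- In the braid group B_3, the word σ1 σ2 σ2 σ1 σ1 σ2 σ2 σ1 σ1 σ2⁻¹ σ2⁻¹ σ2⁻¹ (a braid representative of the knot 12n749) equals the product of the positive bands of its band decomposition with band centers {1, 2, 4, 5, 8, 9}, namely σ1 · σ2 · (σ2 σ1 σ2⁻¹) · (σ2 σ1 σ2⁻¹) · (σ2³ σ1 σ2⁻³) · (σ2³ σ1 σ2⁻³); in particular, this braid is quasipositive. -/

import Mathlib

/-- The Artin relations for the braid group with `m` generators
`σ_1, …, σ_m` (indexed by `Fin m`), i.e. the braid group `B_{m+1}`: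
`σ_i σ_j = σ_j σ_i` for `|i - j| ≥ 2`, and
`σ_i σ_{i+1} σ_i = σ_{i+1} σ_i σ_{i+1}`. -/
def braidRels (m : ℕ) : Set (FreeGroup (Fin m)) :=
  { r | (∃ i j : Fin m, (i : ℕ) + 2 ≤ (j : ℕ) ∧
          r = FreeGroup.of i * FreeGroup.of j * (FreeGroup.of i)⁻¹ * (FreeGroup.of j)⁻¹) ∨
        (∃ i j : Fin m, (i : ℕ) + 1 = (j : ℕ) ∧
          r = FreeGroup.of i * FreeGroup.of j * FreeGroup.of i *
              (FreeGroup.of j)⁻¹ * (FreeGroup.of i)⁻¹ * (FreeGroup.of j)⁻¹) }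

/-- The braid group `B_{m+1}`, presented with `m` Artin generators.
Here index `i : Fin m` corresponds to the Artin generator `σ_{i+1}`. -/
abbrev BraidGrp (m : ℕ) := PresentedGroup (braidRels m)

/-- The Artin generator `σ_{i+1}` of the braid group `B_{m+1}`. -/
def σ {m : ℕ} (i : Fin m) : BraidGrp m := PresentedGroup.of i

/-- A letter of a braid word: a generator index together with a sign
(`true` = the positive generator, `false` = its inverse). -/
abbrev Letter (m : ℕ) := Fin m × Bool

/-- The group element represented by a letter. -/
def letterEl {m : ℕ} (x : Letter m) : BraidGrp m :=
  if x.2 then σ x.1 else (σ x.1)⁻¹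

/-- The group element represented by a braid word. -/
def wordProd {m : ℕ} (w : List (Letter m)) : BraidGrp m :=
  (w.map letterEl).prod

/-- The band of the band decomposition of the word `w` with band centers `S`
(1-based positions) at center `p`: namely `α_p * x_p * α_p⁻¹`, where `x_p` is
the letter of `w` at position `p` and `α_p` is the product, in increasing
order of position, of the letters of `w` at positions `q < p` with `q ∉ S`. -/
def band {m : ℕ} (w : List (Letter m)) (S : List ℕ) (p : ℕ) : BraidGrp m :=
  let α : BraidGrp m :=
    wordProd (((w.zipIdx.map Prod.swap).filter fun qx => decide (qx.1 + 1 < p ∧ qx.1 + 1 ∉ S)).map Prod.snd)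
  match w[p - 1]? with
  | some x => α * letterEl x * α⁻¹
  | none => 1

/-- The product, in increasing order of band center, of the bands of the
band decomposition of the word `w` with band centers `S`. -/
def bandProd {m : ℕ} (w : List (Letter m)) (S : List ℕ) : BraidGrp m :=
  (S.map (band w S)).prod

/-- A positive band in the braid group: a conjugate `α σ_j α⁻¹` of a generator. -/
def IsPositiveBand {m : ℕ} (x : BraidGrp m) : Prop :=
  ∃ (α : BraidGrp m) (j : Fin m), x = α * σ j * α⁻¹

/-- A braid is quasipositive if it is a product of positive bands. -/
def IsQuasipositive {m : ℕ} (x : BraidGrp m) : Prop :=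
  ∃ l : List (BraidGrp m), (∀ b ∈ l, IsPositiveBand b) ∧ x = l.prod

/-- A negative band in the braid group: a conjugate `α σ_j⁻¹ α⁻¹` of the
inverse of a generator. -/
def IsNegativeBand {m : ℕ} (x : BraidGrp m) : Prop :=
  ∃ (α : BraidGrp m) (j : Fin m), x = α * (σ j)⁻¹ * α⁻¹

/-- A braid is quasinegative if it is a product of negative bands. -/
def IsQuasinegative {m : ℕ} (x : BraidGrp m) : Prop :=
  ∃ l : List (BraidGrp m), (∀ b ∈ l, IsNegativeBand b) ∧ x = l.prod

/-- The braid word for the knot `12n749` (letter `(i, true)` is `σ_(i+1)`,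
`(i, false)` is `σ_(i+1)⁻¹`). -/
def theWord : List (Letter 2) :=
  [(0, true), (1, true), (1, true), (0, true), (0, true), (1, true), (1, true), (0, true), (0, true), (1, false), (1, false), (1, false)]

/-- The band centers. -/
def theCenters : List ℕ := [1, 2, 4, 5, 8, 9]

/-! The conjugators `α_p` telescope: the product of the bands is the word with its non-center
letters `σ₂ σ₂ σ₂` (positions 3, 6, 7) collected after the last center, where they cancel the
final `σ₂⁻³`. Only free cancellation is involved, no braid relation. -/

theorem isPositiveBand_band {m : ℕ} {w : List (Letter m)} (S : List ℕ) {p : ℕ} {j : Fin m}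
    (h : w[p - 1]? = some (j, true)) : IsPositiveBand (band w S p) :=
  ⟨_, j, by simp only [band, h, letterEl, if_true]; rfl⟩

theorem isQuasipositive_bandProd {m : ℕ} {w : List (Letter m)} {S : List ℕ}
    (hS : ∀ p ∈ S, ∃ j, w[p - 1]? = some (j, true)) : IsQuasipositive (bandProd w S) := by
  refine ⟨S.map (band w S), fun b hb => ?_, rfl⟩
  obtain ⟨p, hp, rfl⟩ := List.mem_map.1 hb
  obtain ⟨j, hj⟩ := hS p hp
  exact isPositiveBand_band S hj

theorem wordProd_theWord :
    wordProd theWord =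
      σ 0 * σ 1 * (σ 1 * σ 0 * (σ 1)⁻¹) * (σ 1 * σ 0 * (σ 1)⁻¹) *
        ((σ 1) ^ 3 * σ 0 * ((σ 1) ^ 3)⁻¹) * ((σ 1) ^ 3 * σ 0 * ((σ 1) ^ 3)⁻¹) := by
  simp only [wordProd, theWord, letterEl, List.map, List.prod_cons, List.prod_nil, if_true,
    Bool.false_eq_true, if_false, pow_succ, pow_zero, one_mul, mul_inv_rev, mul_assoc,
    inv_mul_cancel_left, mul_one]

theorem bandProd_theWord_theCenters :
    bandProd theWord theCenters =
      σ 0 * σ 1 * (σ 1 * σ 0 * (σ 1)⁻¹) * (σ 1 * σ 0 * (σ 1)⁻¹) *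
        ((σ 1) ^ 3 * σ 0 * ((σ 1) ^ 3)⁻¹) * ((σ 1) ^ 3 * σ 0 * ((σ 1) ^ 3)⁻¹) := by
  simp [bandProd, band, theWord, theCenters, wordProd, letterEl, pow_succ, mul_assoc]

/-- The braid representative of `12n749` equals the product of the bands of its
band decomposition with the given band centers; in particular it is quasipositive. -/
theorem knot_12n749_quasipositive :
    wordProd theWord = bandProd theWord theCenters ∧
      bandProd theWord theCenters =
        σ 0 * σ 1 * (σ 1 * σ 0 * (σ 1)⁻¹) * (σ 1 * σ 0 * (σ 1)⁻¹) * ((σ 1) ^ 3 * σ 0 * ((σ 1) ^ 3)⁻¹) * ((σ 1) ^ 3 * σ 0 * ((σ 1) ^ 3)⁻¹) ∧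
      IsQuasipositive (wordProd theWord) := by
  have hword : wordProd theWord = bandProd theWord theCenters :=
    wordProd_theWord.trans bandProd_theWord_theCenters.symm
  refine ⟨hword, bandProd_theWord_theCenters, hword ▸ isQuasipositive_bandProd ?_⟩
  decide
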